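/- arXiv:math/9804118 — 2 statements merged into one kernel-verified Lean document; each statement's English description precedes it below -/
import Mathlib

section
/- Let g: ℝ → (0,∞) be continuous and φ*: [0,∞) → ℝ be continuous and nonincreasing. Define M(r) = 2π ∫₀^r g(φ*(s)) s ds, A(r) = 2π ∫₀^r G(φ*(s)) s ds where G is a primitive of g, and H(r) = ½ M(r)² + 2π r³ d/dr(A(r)/r²). If the differential inequality -2πr (φ*)'(r) ≤ M(r) holds for all r > 0, then H'(r) ≥ 0 for all r > 0. -/
/-!
Writing `A' = a·r` with `a = 2π G∘φ*`, the term `r A' - 2A` has derivative `a' r² = 2π g(φ*) (φ*)' r²`,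
while `(½ M²)' = M · 2π g(φ*) r`. Hence `H' = 2π r g(φ*(r)) (M(r) + 2π r (φ*)'(r))`, which is
nonnegative by the hypothesis on `φ*` and the positivity of `g`.
-/

open Real intervalIntegral

lemma hasDerivAt_two_pi_integral_mul_id {f : ℝ → ℝ} (hf : Continuous f) (r : ℝ) :
    HasDerivAt (fun x => 2 * π * ∫ s in (0 : ℝ)..x, f s * s) (2 * π * (f r * r)) r :=
  ((hf.mul continuous_id).integral_hasStrictDerivAt 0 r).hasDerivAt.const_mul (2 * π)

lemma hasDerivAt_mul_deriv_sub_two_mul {A a : ℝ → ℝ} {a' r : ℝ}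
    (hA : ∀ x, HasDerivAt A (a x * x) x) (ha : HasDerivAt a a' r) :
    HasDerivAt (fun x => x * deriv A x - 2 * A x) (a' * r ^ 2) r := by
  have hderiv : (fun x => x * deriv A x - 2 * A x) = fun x => x * (a x * x) - 2 * A x :=
    funext fun x => by rw [(hA x).deriv]
  rw [hderiv]
  exact (((hasDerivAt_id r).mul (ha.mul (hasDerivAt_id r))).sub ((hA r).const_mul 2)).congr_deriv
    (by simp only [Pi.mul_apply, id]; ring)

theorem H_monotone_general
    (g G φstar M A H : ℝ → ℝ)
    (hg : Continuous g) (hgpos : ∀ t, 0 < g t)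
    (hG : ∀ t, HasDerivAt G (g t) t)
    (hφ : ContDiff ℝ 1 φstar)
    (hM : ∀ r, M r = 2 * π * ∫ s in (0 : ℝ)..r, g (φstar s) * s)
    (hA : ∀ r, A r = 2 * π * ∫ s in (0 : ℝ)..r, G (φstar s) * s)
    (hH : ∀ r, H r = (1 / 2) * (M r) ^ 2 + 2 * π * (r * deriv A r - 2 * A r))
    (hineq : ∀ r > (0 : ℝ), -(2 * π * r * deriv φstar r) ≤ M r) :
    ∀ r > (0 : ℝ), 0 ≤ deriv H r := by
  intro r hr
  have hφc : Continuous φstar := hφ.continuous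
  have hGc : Continuous G := continuous_iff_continuousAt.2 fun t => (hG t).continuousAt
  have hM' : HasDerivAt M (2 * π * (g (φstar r) * r)) r := by
    rw [funext hM]
    exact hasDerivAt_two_pi_integral_mul_id (hg.comp hφc) r
  have hA' : ∀ x, HasDerivAt A ((2 * π * G (φstar x)) * x) x := fun x => by
    rw [funext hA, mul_assoc]
    exact hasDerivAt_two_pi_integral_mul_id (hGc.comp hφc) x
  have ha' : HasDerivAt (fun x => 2 * π * G (φstar x)) (2 * π * (g (φstar r) * deriv φstar r)) r :=
    ((hG (φstar r)).comp r (hφ.differentiable one_ne_zero r).hasDerivAt).const_mul (2 * π)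
  have hH' : HasDerivAt H (M r * (2 * π * (g (φstar r) * r))
      + 2 * π * (2 * π * (g (φstar r) * deriv φstar r) * r ^ 2)) r := by
    rw [funext hH]
    exact (((hM'.pow 2).const_mul (1 / 2)).add
      ((hasDerivAt_mul_deriv_sub_two_mul hA' ha').const_mul (2 * π))).congr_deriv (by push_cast; ring)
  rw [hH'.deriv]
  have hfactor : 0 ≤ 2 * π * g (φstar r) * r := by
    have := hgpos (φstar r)
    positivity
  calc (0 : ℝ) ≤ 2 * π * g (φstar r) * r * (M r + 2 * π * r * deriv φstar r) :=
        mul_nonneg hfactor (by linarith [hineq r hr])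
    _ = _ := by ring

/-- Lemma 4 (differential form): with `M(r) = 2π∫₀^r g(φ*(s)) s ds`,
`A(r) = 2π∫₀^r G(φ*(s)) s ds` (`G' = g`) and
`H(r) = ½M(r)² + 2π(rA'(r) - 2A(r))`, the isoperimetric-type inequality
`-2πr (φ*)'(r) ≤ M(r)` implies `H'(r) ≥ 0` for all `r > 0`. -/
theorem H_monotone
    (g G φstar M A H : ℝ → ℝ)
    (hg : Continuous g) (hgpos : ∀ t, 0 < g t)
    (hG : ∀ t, HasDerivAt G (g t) t)
    (hφ : ContDiff ℝ 1 φstar) (hφmono : Antitone φstar)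
    (hM : ∀ r, M r = 2 * π * ∫ s in (0 : ℝ)..r, g (φstar s) * s)
    (hA : ∀ r, A r = 2 * π * ∫ s in (0 : ℝ)..r, G (φstar s) * s)
    (hH : ∀ r, H r = (1 / 2) * (M r) ^ 2 + 2 * π * (r * deriv A r - 2 * A r))
    (hineq : ∀ r > (0 : ℝ), -(2 * π * r * deriv φstar r) ≤ M r) :
    ∀ r > (0 : ℝ), 0 ≤ deriv H r :=
  H_monotone_general g G φstar M A H hg hgpos hG hφ hM hA hH hineq
end

section
/- Let u: ℂ → ℂ be real-analytic (its real and imaginary parts are real-analytic) and satisfy -4 ∂_z ∂_{z̄} u = u(1 - |u|²) near 0, with u(0) = 0 and lowest-order Taylor term of total degree m ≥ 2. Then in the Taylor expansion u(z, z̄) = Σ_{|α|=m} a_α z^{α₁} z̄^{α₂} + O(|z|^{m+1}), all mixed coefficients vanish: a_{(m₁,m₂)} = 0 whenever m₁ ≥ 1 and m₂ ≥ 1, m₁ + m₂ = m; hence u(z,z̄) = a_{(m,0)} z^m + a_{(0,m)} z̄^m + O(|z|^{m+1}). -/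
open Filter Asymptotics

/-- The Wirtinger derivative `∂_z = ½(∂_x - i ∂_y)` of `f : ℂ → ℂ`. -/
noncomputable def wirtingerDz (f : ℂ → ℂ) (x : ℂ) : ℂ :=
  (fderiv ℝ f x 1 - Complex.I * fderiv ℝ f x Complex.I) / 2

/-- The Wirtinger derivative `∂_z̄ = ½(∂_x + i ∂_y)` of `f : ℂ → ℂ`. -/
noncomputable def wirtingerDzbar (f : ℂ → ℂ) (x : ℂ) : ℂ :=
  (fderiv ℝ f x 1 + Complex.I * fderiv ℝ f x Complex.I) / 2

/-! ### Auxiliary lemmas -/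

/-- A function homogeneous of degree `n` which is `O(|z|^{n+1})` at `0` vanishes. -/
lemma GL_homog_vanish {f : ℂ → ℂ} {n : ℕ}
    (hh : ∀ (s : ℝ) (x : ℂ), f (s • x) = (s ^ n : ℝ) • f x)
    (hO : f =O[nhds 0] fun z : ℂ => ‖z‖ ^ (n + 1)) : ∀ x, f x = 0 := by
  intro x
  obtain ⟨C, hC⟩ := hO.bound
  obtain ⟨δ, hδ, hball⟩ := Metric.eventually_nhds_iff.1 hC
  have key : ∀ᶠ s in nhdsWithin (0:ℝ) (Set.Ioi 0), ‖f x‖ ≤ (C * ‖x‖ ^ (n+1)) * s := by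
    filter_upwards [Ioo_mem_nhdsGT (by positivity : (0:ℝ) < δ / (‖x‖ + 1))] with s hs
    have hs0 : 0 < s := hs.1
    have e2 : ‖s • x‖ = s * ‖x‖ := by
      rw [norm_smul, Real.norm_eq_abs, abs_of_pos hs0]
    have hsmall : ‖s • x‖ < δ := by
      rw [e2]
      calc s * ‖x‖ ≤ s * (‖x‖ + 1) := by nlinarith [norm_nonneg x]
        _ < δ / (‖x‖+1) * (‖x‖+1) := mul_lt_mul_of_pos_right hs.2 (by positivity)
        _ = δ := by field_simp
    have hb := hball (y := s • x) (by simpa using hsmall)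
    have e1 : ‖f (s • x)‖ = s ^ n * ‖f x‖ := by
      rw [hh s x, norm_smul, Real.norm_eq_abs, abs_of_nonneg (pow_nonneg hs0.le n)]
    rw [e1, e2, Real.norm_eq_abs,
      abs_of_nonneg (pow_nonneg (mul_nonneg hs0.le (norm_nonneg x)) (n+1))] at hb
    have h2 : s ^ n * ‖f x‖ ≤ (C * ‖x‖^(n+1) * s) * s ^ n := by
      calc s ^ n * ‖f x‖ ≤ C * (s * ‖x‖) ^ (n + 1) := hb
        _ = (C * ‖x‖^(n+1) * s) * s ^ n := by ring
    exact le_of_mul_le_mul_right (by linarith [h2]) (pow_pos hs0 n)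
  have hlim : Tendsto (fun s : ℝ => (C * ‖x‖ ^ (n+1)) * s) (nhdsWithin 0 (Set.Ioi 0)) (nhds 0) := by
    have h := ((continuous_const.mul continuous_id).tendsto (0:ℝ) :
      Tendsto (fun s : ℝ => (C * ‖x‖ ^ (n+1)) * s) (nhds 0) (nhds ((C * ‖x‖ ^ (n+1)) * 0)))
    simp only [id, Pi.mul_apply, mul_zero] at h
    exact h.mono_left nhdsWithin_le_nhds
  have : ‖f x‖ ≤ 0 := ge_of_tendsto hlim key
  simpa using le_antisymm this (norm_nonneg _)

lemma GL_pow_isBigO_pow {j K : ℕ} (h : j ≤ K) :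
    (fun z : ℂ => ‖z‖ ^ K) =O[nhds 0] fun z : ℂ => ‖z‖ ^ j := by
  rw [isBigO_iff]
  refine ⟨1, ?_⟩
  filter_upwards [Metric.ball_mem_nhds (0:ℂ) one_pos] with z hz
  simp only [Metric.mem_ball, dist_zero_right] at hz
  rw [one_mul, Real.norm_eq_abs, Real.norm_eq_abs, abs_of_nonneg (by positivity),
    abs_of_nonneg (by positivity)]
  exact pow_le_pow_of_le_one (norm_nonneg z) hz.le h

/-- If an analytic function is `O(|z|^K)` at `0`, then the diagonal values of
its power series coefficients below order `K` vanish. -/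
lemma GL_diag_coeff_vanish {w : ℂ → ℂ} {p : FormalMultilinearSeries ℝ ℂ ℂ}
    (hp : HasFPowerSeriesAt w p 0) {K : ℕ} (hO : w =O[nhds 0] fun z : ℂ => ‖z‖ ^ K) :
    ∀ n, n < K → ∀ x : ℂ, p n (fun _ => x) = 0 := by
  intro n
  induction n using Nat.strong_induction_on with
  | _ n IH =>
    intro hn x
    have hbig := hp.isBigO_sub_partialSum_pow (n+1)
    simp only [zero_add] at hbig
    have hPS : ∀ y : ℂ, p.partialSum (n+1) y = p n (fun _ => y) := by
      intro y
      rw [FormalMultilinearSeries.partialSum]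
      rw [Finset.sum_eq_single n]
      · intro k hk hkn
        exact IH k (lt_of_le_of_ne (Nat.lt_succ_iff.1 (Finset.mem_range.1 hk)) hkn)
          (lt_of_le_of_lt (le_of_lt (lt_of_le_of_ne
            (Nat.lt_succ_iff.1 (Finset.mem_range.1 hk)) hkn)) hn) y
      · intro hmem
        exact absurd (Finset.self_mem_range_succ n) hmem
    have hO' : w =O[nhds 0] fun z : ℂ => ‖z‖ ^ (n+1) := hO.trans (GL_pow_isBigO_pow hn)
    have hdiag : (fun y : ℂ => p n (fun _ => y)) =O[nhds 0] fun y : ℂ => ‖y‖ ^ (n+1) := by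
      have := hO'.sub hbig
      simpa [hPS] using this
    refine GL_homog_vanish (fun s x => ?_) hdiag x
    have := (p n).map_smul_univ (fun _ : Fin n => s) (fun _ => x)
    simpa [Finset.prod_const] using this

/-- Key lemma: the derivative of an analytic `O(|z|^{k+1})` function is `O(|z|^k)`. -/
lemma GL_fderiv_apply_isBigO {w : ℂ → ℂ} {k : ℕ} (hw : AnalyticAt ℝ w 0)
    (hO : w =O[nhds 0] fun z : ℂ => ‖z‖ ^ (k+1)) (t : ℂ) :
    (fun z : ℂ => fderiv ℝ w z t) =O[nhds 0] fun z : ℂ => ‖z‖ ^ k := by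
  obtain ⟨p, hpa⟩ := hw
  obtain ⟨r, hp⟩ := hpa
  have hdiag : ∀ n, n < k + 1 → ∀ x : ℂ, p n (fun _ => x) = 0 :=
    GL_diag_coeff_vanish hp.hasFPowerSeriesAt hO
  set q : FormalMultilinearSeries ℝ ℂ ℂ := fun n => if n ≤ k then 0 else p n with hqdef
  have hqnorm : ∀ n, ‖q n‖ ≤ ‖p n‖ := by
    intro n
    by_cases h : n ≤ k <;> simp [hqdef, h]
  have hq : HasFPowerSeriesOnBall w q 0 r := by
    refine ⟨le_trans ?_ (FormalMultilinearSeries.radius_le_of_le hqnorm), hp.r_pos, ?_⟩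
    · exact hp.r_le
    · intro y hy
      have := hp.hasSum hy
      refine HasSum.congr_fun this fun n => ?_
      by_cases h : n ≤ k
      · simp [hqdef, h, hdiag n (Nat.lt_succ_of_le h) y]
      · simp [hqdef, h]
  have hqd : HasFPowerSeriesOnBall (fderiv ℝ w) q.derivSeries 0 r := hq.fderiv
  have hds : ∀ n, n < k → q.derivSeries n = 0 := by
    intro n hn
    have h1 : q (1 + n) = 0 := by
      simp [hqdef, Nat.one_add_le_iff.2, if_pos (by omega : 1 + n ≤ k)]
    ext v s
    simp [FormalMultilinearSeries.derivSeries,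
      FormalMultilinearSeries.changeOriginSeries,
      FormalMultilinearSeries.changeOriginSeriesTerm, h1]
  have hbig := hqd.hasFPowerSeriesAt.isBigO_sub_partialSum_pow k
  simp only [zero_add] at hbig
  have hPS : ∀ y : ℂ, q.derivSeries.partialSum k y = 0 := by
    intro y
    rw [FormalMultilinearSeries.partialSum]
    apply Finset.sum_eq_zero
    intro n hn
    rw [hds n (Finset.mem_range.1 hn)]
    rfl
  have hO2 : (fun y : ℂ => fderiv ℝ w y) =O[nhds 0] fun y : ℂ => ‖y‖ ^ k := by
    have heq : (fun y : ℂ => fderiv ℝ w y)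
        = fun y => fderiv ℝ w y - q.derivSeries.partialSum k y := by
      funext y; rw [hPS y, sub_zero]
    rw [heq]; exact hbig
  calc (fun z : ℂ => fderiv ℝ w z t) =O[nhds 0] (fun z : ℂ => fderiv ℝ w z) := by
        rw [isBigO_iff]
        exact ⟨‖t‖, Eventually.of_forall fun z => by
          rw [mul_comm]; exact (fderiv ℝ w z).le_opNorm t⟩
    _ =O[nhds 0] fun z : ℂ => ‖z‖ ^ k := hO2

/-- Complex conjugation as a real-linear continuous map. -/
noncomputable def GLconjR : ℂ →L[ℝ] ℂ := Complex.conjCLE.toContinuousLinearMap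

@[simp] lemma GLconjR_apply (z : ℂ) : GLconjR z = starRingEnd ℂ z := rfl

lemma GL_hasFDerivAt_mono (p q : ℕ) (z : ℂ) :
    HasFDerivAt (fun w : ℂ => w ^ p * (starRingEnd ℂ w) ^ q)
      (((p : ℂ) * z ^ (p - 1) * (starRingEnd ℂ z) ^ q) • (1 : ℂ →L[ℝ] ℂ) +
       ((q : ℂ) * z ^ p * (starRingEnd ℂ z) ^ (q - 1)) • GLconjR) z := by
  have h1 : HasFDerivAt (fun w : ℂ => w ^ p)
      (((p : ℂ) * z ^ (p - 1)) • (1 : ℂ →L[ℝ] ℂ)) z :=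
    (hasDerivAt_pow p z).complexToReal_fderiv
  have hconj : HasFDerivAt (fun w : ℂ => starRingEnd ℂ w) GLconjR z :=
    Complex.conjCLE.hasFDerivAt
  have hpow : HasFDerivAt (fun w : ℂ => w ^ q)
      (((q : ℂ) * (starRingEnd ℂ z) ^ (q - 1)) • (1 : ℂ →L[ℝ] ℂ)) (starRingEnd ℂ z) :=
    (hasDerivAt_pow q (starRingEnd ℂ z)).complexToReal_fderiv
  have h2 : HasFDerivAt (fun w : ℂ => (starRingEnd ℂ w) ^ q)
      (((q : ℂ) * (starRingEnd ℂ z) ^ (q - 1)) • GLconjR) z := by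
    have := hpow.comp z hconj
    refine this.congr_fderiv ?_
    ext v
    simp
  have := h1.mul h2
  refine this.congr_fderiv ?_
  ext v
  simp [ContinuousLinearMap.smul_apply]
  ring

lemma GL_hasFDerivAt_wirt_sum {ι : Type*} (s : Finset ι) (c : ι → ℂ) (P Q : ι → ℕ) (z : ℂ) :
    HasFDerivAt (fun w : ℂ => ∑ i ∈ s, c i * w ^ P i * (starRingEnd ℂ w) ^ Q i)
      ((∑ i ∈ s, c i * P i * z ^ (P i - 1) * (starRingEnd ℂ z) ^ Q i) • (1 : ℂ →L[ℝ] ℂ) +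
       (∑ i ∈ s, c i * Q i * z ^ P i * (starRingEnd ℂ z) ^ (Q i - 1)) • GLconjR) z := by
  have h : ∀ i ∈ s, HasFDerivAt (fun w : ℂ => c i * (w ^ P i * (starRingEnd ℂ w) ^ Q i))
      (c i • ((((P i : ℂ)) * z ^ (P i - 1) * (starRingEnd ℂ z) ^ Q i) • (1 : ℂ →L[ℝ] ℂ) +
       (((Q i : ℂ)) * z ^ P i * (starRingEnd ℂ z) ^ (Q i - 1)) • GLconjR)) z :=
    fun i _ => (GL_hasFDerivAt_mono (P i) (Q i) z).const_mul (c i)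
  have hsum := HasFDerivAt.fun_sum h
  convert hsum using 1
  · rfl
  · rfl
  · funext w
    exact Finset.sum_congr rfl fun i _ => (mul_assoc _ _ _)
  · have hterm : ∀ i ∈ s,
        c i • ((((P i : ℂ)) * z ^ (P i - 1) * (starRingEnd ℂ z) ^ Q i) • (1 : ℂ →L[ℝ] ℂ) +
          (((Q i : ℂ)) * z ^ P i * (starRingEnd ℂ z) ^ (Q i - 1)) • GLconjR)
        = (c i * P i * z ^ (P i - 1) * (starRingEnd ℂ z) ^ Q i) • (1 : ℂ →L[ℝ] ℂ)
          + (c i * Q i * z ^ P i * (starRingEnd ℂ z) ^ (Q i - 1)) • GLconjR := by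
      intro i _
      rw [smul_add, smul_smul, smul_smul]
      congr 2 <;> ring
    rw [Finset.sum_congr rfl hterm, Finset.sum_add_distrib]
    congr 1 <;> ext v <;> simp [ContinuousLinearMap.sum_apply, Finset.sum_smul, Finset.sum_mul]

lemma GL_wirt_eval {f : ℂ → ℂ} {A B : ℂ} {z : ℂ}
    (h : HasFDerivAt f (A • (1 : ℂ →L[ℝ] ℂ) + B • GLconjR) z) :
    wirtingerDz f z = A ∧ wirtingerDzbar f z = B := by
  have hf := h.fderiv
  unfold wirtingerDz wirtingerDzbar
  rw [hf]
  simp only [ContinuousLinearMap.add_apply, ContinuousLinearMap.smul_apply,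
    ContinuousLinearMap.one_apply, GLconjR_apply, map_one, Complex.conj_I, smul_eq_mul]
  constructor
  · linear_combination ((B - A)/2) * Complex.I_sq
  · linear_combination ((A - B)/2) * Complex.I_sq

lemma GL_wirt_sub {f g : ℂ → ℂ} {z : ℂ}
    (hf : DifferentiableAt ℝ f z) (hg : DifferentiableAt ℝ g z) :
    wirtingerDz (fun w => f w - g w) z = wirtingerDz f z - wirtingerDz g z ∧
    wirtingerDzbar (fun w => f w - g w) z = wirtingerDzbar f z - wirtingerDzbar g z := by
  unfold wirtingerDz wirtingerDzbar
  rw [fderiv_fun_sub hf hg]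
  simp only [ContinuousLinearMap.coe_sub', Pi.sub_apply]
  constructor <;> ring

lemma GL_fourier {N : ℕ} (d : ℕ → ℂ)
    (h : ∀ θ : ℝ, ∑ j ∈ Finset.range N, d j * Complex.exp ((2 * (j : ℂ)) * θ * Complex.I) = 0) :
    ∀ j ∈ Finset.range N, d j = 0 := by
  intro j₀ hj₀
  have key : ∀ θ : ℝ, ∑ j ∈ Finset.range N,
      d j * Complex.exp ((2 * (j : ℂ) - 2 * (j₀ : ℂ)) * Complex.I * θ) = 0 := by
    intro θ
    have h1 := h θ
    have h2 : ∑ j ∈ Finset.range N, d j * Complex.exp ((2 * (j : ℂ) - 2 * (j₀ : ℂ)) * Complex.I * θ)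
        = (∑ j ∈ Finset.range N, d j * Complex.exp ((2 * (j : ℂ)) * θ * Complex.I)) *
          Complex.exp ((-2 * (j₀ : ℂ)) * θ * Complex.I) := by
      rw [Finset.sum_mul]
      refine Finset.sum_congr rfl fun j _ => ?_
      rw [mul_assoc (d j) (Complex.exp _) (Complex.exp _), ← Complex.exp_add]
      congr 1
      ring
    rw [h2, h1, zero_mul]
  have hint : ∀ j : ℕ, (∫ θ : ℝ in (0:ℝ)..(2 * Real.pi),
      Complex.exp ((2 * (j : ℂ) - 2 * (j₀ : ℂ)) * Complex.I * θ))
      = if j = j₀ then (2 * Real.pi : ℂ) else 0 := by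
    intro j
    by_cases hjj : j = j₀
    · subst hjj
      simp
    · rw [if_neg hjj]
      have hc : (2 * (j : ℂ) - 2 * (j₀ : ℂ)) * Complex.I ≠ 0 := by
        apply mul_ne_zero _ Complex.I_ne_zero
        intro hzero
        apply hjj
        have : (j : ℂ) = (j₀ : ℂ) := by linear_combination hzero / 2
        exact_mod_cast this
      rw [integral_exp_mul_complex hc]
      have h1 : Complex.exp ((2 * (j : ℂ) - 2 * (j₀ : ℂ)) * Complex.I *
          ((2 * Real.pi : ℝ) : ℂ)) = 1 := by
        have h2 := Complex.exp_int_mul_two_pi_mul_I (2 * ((j : ℤ) - (j₀ : ℤ)))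
        rw [← h2]
        congr 1
        push_cast
        ring
      rw [Complex.ofReal_zero, mul_zero, Complex.exp_zero, h1]
      simp
  have hzero : (∫ θ : ℝ in (0:ℝ)..(2 * Real.pi), ∑ j ∈ Finset.range N,
      d j * Complex.exp ((2 * (j : ℂ) - 2 * (j₀ : ℂ)) * Complex.I * θ)) = 0 := by
    rw [intervalIntegral.integral_congr (g := fun _ => (0:ℂ)) (fun θ _ => key θ)]
    simp
  rw [intervalIntegral.integral_finset_sum] at hzero
  · have heval : ∀ j ∈ Finset.range N, (∫ θ : ℝ in (0:ℝ)..(2 * Real.pi),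
        d j * Complex.exp ((2 * (j : ℂ) - 2 * (j₀ : ℂ)) * Complex.I * θ))
        = d j * (if j = j₀ then (2 * Real.pi : ℂ) else 0) := by
      intro j _
      rw [intervalIntegral.integral_const_mul, hint j]
    rw [Finset.sum_congr rfl heval] at hzero
    simp only [mul_ite, mul_zero] at hzero
    rw [Finset.sum_ite_eq' (Finset.range N) j₀] at hzero
    rw [if_pos hj₀] at hzero
    have h2π : (2 * Real.pi : ℂ) ≠ 0 := by
      simp [Complex.ofReal_ne_zero, Real.pi_ne_zero]
    exact (mul_eq_zero.1 hzero).resolve_right h2π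
  · intro j _
    apply Continuous.intervalIntegrable
    continuity

lemma GL_wirt_parts_bigO {w : ℂ → ℂ} {k : ℕ} (hw : AnalyticAt ℝ w 0)
    (hO : w =O[nhds 0] fun z : ℂ => ‖z‖ ^ (k+1)) :
    (wirtingerDz w) =O[nhds 0] (fun z : ℂ => ‖z‖ ^ k) ∧
    (wirtingerDzbar w) =O[nhds 0] (fun z : ℂ => ‖z‖ ^ k) := by
  have h1 := GL_fderiv_apply_isBigO hw hO 1
  have hI := GL_fderiv_apply_isBigO hw hO Complex.I
  constructor
  · have heq : wirtingerDz w = fun z =>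
        (1/2 : ℂ) * (fderiv ℝ w z 1) + (-(Complex.I/2)) * (fderiv ℝ w z Complex.I) := by
      funext z
      unfold wirtingerDz
      ring
    rw [heq]
    exact (h1.const_mul_left _).add (hI.const_mul_left _)
  · have heq : wirtingerDzbar w = fun z =>
        (1/2 : ℂ) * (fderiv ℝ w z 1) + (Complex.I/2) * (fderiv ℝ w z Complex.I) := by
      funext z
      unfold wirtingerDzbar
      ring
    rw [heq]
    exact (h1.const_mul_left _).add (hI.const_mul_left _)

lemma GL_wirt_analytic {w : ℂ → ℂ} (hw : AnalyticAt ℝ w 0) :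
    AnalyticAt ℝ (wirtingerDzbar w) 0 := by
  have hfd : AnalyticAt ℝ (fderiv ℝ w) 0 := hw.fderiv
  have h1 : AnalyticAt ℝ (fun z : ℂ => fderiv ℝ w z 1) 0 :=
    ((ContinuousLinearMap.apply ℝ ℂ (1:ℂ)).analyticAt _).comp hfd
  have hI : AnalyticAt ℝ (fun z : ℂ => fderiv ℝ w z Complex.I) 0 :=
    ((ContinuousLinearMap.apply ℝ ℂ (Complex.I)).analyticAt _).comp hfd
  show AnalyticAt ℝ (fun z : ℂ =>
    (fderiv ℝ w z 1 + Complex.I * fderiv ℝ w z Complex.I) / 2) 0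
  exact (h1.add (analyticAt_const.mul hI)).div analyticAt_const (by norm_num)

lemma GL_wirt_differentiable {w : ℂ → ℂ} (hw : ContDiff ℝ (⊤ : ℕ∞) w) :
    Differentiable ℝ (wirtingerDzbar w) := by
  have hfd : ContDiff ℝ (⊤ : ℕ∞) (fderiv ℝ w) := hw.fderiv_right ((mod_cast le_top))
  have h1 : Differentiable ℝ (fun z : ℂ => fderiv ℝ w z (1:ℂ)) :=
    (hfd.clm_apply contDiff_const).differentiable (by simp)
  have hI : Differentiable ℝ (fun z : ℂ => fderiv ℝ w z Complex.I) :=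
    (hfd.clm_apply contDiff_const).differentiable (by simp)
  show Differentiable ℝ (fun z : ℂ =>
    (fderiv ℝ w z 1 + Complex.I * fderiv ℝ w z Complex.I) * (2:ℂ)⁻¹)
  exact (h1.add (hI.const_mul Complex.I)).mul_const _

/-- Lemma 6 of the paper. -/
theorem mixed_taylor_coefficients_vanish
    (u : ℂ → ℂ) (a : ℕ → ℕ → ℂ) (m : ℕ) (hm : 2 ≤ m)
    (hsmooth : ContDiff ℝ (⊤ : ℕ∞) u) (hanalytic : AnalyticAt ℝ u 0)
    (htaylor : ∀ n : ℕ,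
      (fun z : ℂ => u z - ∑ p ∈ Finset.range (n + 1), ∑ q ∈ Finset.range (n + 1 - p),
        a p q * z ^ p * (starRingEnd ℂ z) ^ q) =O[nhds 0] fun z : ℂ => ‖z‖ ^ (n + 1))
    (hpde : ∀ᶠ z in nhds (0 : ℂ),
      -4 * wirtingerDz (wirtingerDzbar u) z = u z * (1 - (‖u z‖ : ℂ) ^ 2))
    (hzero : u 0 = 0)
    (hlow : ∀ p q : ℕ, p + q < m → a p q = 0)
    (hnontriv : ∃ p q : ℕ, p + q = m ∧ a p q ≠ 0) :
    (∀ p q : ℕ, p + q = m → 1 ≤ p → 1 ≤ q → a p q = 0) ∧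
      (fun z : ℂ => u z - (a m 0 * z ^ m + a 0 m * (starRingEnd ℂ z) ^ m))
        =O[nhds 0] fun z : ℂ => ‖z‖ ^ (m + 1) := by
  obtain ⟨M, rfl⟩ : ∃ M, m = M + 2 := ⟨m - 2, by omega⟩
  clear hm hnontriv
  set sig : Finset (Σ _ : ℕ, ℕ) :=
    (Finset.range (M+3)).sigma (fun p => Finset.range (M+3 - p)) with hsigdef
  set T : ℂ → ℂ := fun z => ∑ i ∈ sig, a i.1 i.2 * z ^ i.1 * (starRingEnd ℂ z) ^ i.2 with hTdef
  have hTsum : ∀ z : ℂ, T z = ∑ p ∈ Finset.range (M+3), ∑ q ∈ Finset.range (M+3-p),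
      a p q * z ^ p * (starRingEnd ℂ z) ^ q := by
    intro z
    rw [hTdef]
    exact Finset.sum_sigma _ _ _
  -- u - T = O(|z|^(M+3))
  have hu_T : (fun z : ℂ => u z - T z) =O[nhds 0] fun z : ℂ => ‖z‖ ^ (M+3) := by
    have h := htaylor (M+2)
    have heq : (fun z : ℂ => u z - ∑ p ∈ Finset.range (M+2+1), ∑ q ∈ Finset.range (M+2+1-p),
        a p q * z ^ p * (starRingEnd ℂ z) ^ q) = fun z : ℂ => u z - T z := by
      funext z
      rw [hTsum z]
    rw [heq] at h
    exact h
  -- u = O(|z|^(M+2))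
  have huO : u =O[nhds 0] fun z : ℂ => ‖z‖ ^ (M+2) := by
    have h := htaylor (M+1)
    have heq : (fun z : ℂ => u z - ∑ p ∈ Finset.range (M+1+1), ∑ q ∈ Finset.range (M+1+1-p),
        a p q * z ^ p * (starRingEnd ℂ z) ^ q) = u := by
      funext z
      have : ∀ p ∈ Finset.range (M+2), ∑ q ∈ Finset.range (M+2-p),
          a p q * z ^ p * (starRingEnd ℂ z) ^ q = 0 := by
        intro p hp
        apply Finset.sum_eq_zero
        intro q hq
        have : a p q = 0 := hlow p q (by
          simp only [Finset.mem_range] at hp hq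
          omega)
        simp [this]
      rw [Finset.sum_congr rfl this]
      simp
    rw [heq] at h
    exact h
  -- analyticity of T and R
  have hconjan : AnalyticAt ℝ (fun z : ℂ => starRingEnd ℂ z) 0 := GLconjR.analyticAt 0
  have hTan : AnalyticAt ℝ T 0 := by
    rw [hTdef]
    apply Finset.analyticAt_fun_sum
    intro i _
    exact (analyticAt_const.mul (analyticAt_id.pow _)).mul (hconjan.pow _)
  have hRan : AnalyticAt ℝ (fun z : ℂ => u z - T z) 0 := hanalytic.sub hTan
  -- derivatives of T
  have hTd : ∀ z : ℂ, HasFDerivAt T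
      ((∑ i ∈ sig, a i.1 i.2 * i.1 * z ^ (i.1 - 1) * (starRingEnd ℂ z) ^ i.2) • (1 : ℂ →L[ℝ] ℂ) +
       (∑ i ∈ sig, a i.1 i.2 * i.2 * z ^ i.1 * (starRingEnd ℂ z) ^ (i.2 - 1)) • GLconjR) z :=
    fun z => GL_hasFDerivAt_wirt_sum sig (fun i => a i.1 i.2) (fun i => i.1) (fun i => i.2) z
  set B1 : ℂ → ℂ :=
    fun z => ∑ i ∈ sig, a i.1 i.2 * (i.2 : ℂ) * z ^ i.1 * (starRingEnd ℂ z) ^ (i.2 - 1)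
    with hB1def
  have hTzbar : ∀ z : ℂ, wirtingerDzbar T z = B1 z := fun z => (GL_wirt_eval (hTd z)).2
  have hB1d : ∀ z : ℂ, HasFDerivAt B1
      ((∑ i ∈ sig, a i.1 i.2 * (i.2 : ℂ) * i.1 * z ^ (i.1 - 1) *
          (starRingEnd ℂ z) ^ (i.2 - 1)) • (1 : ℂ →L[ℝ] ℂ) +
       (∑ i ∈ sig, a i.1 i.2 * (i.2 : ℂ) * (i.2 - 1 : ℕ) * z ^ i.1 *
          (starRingEnd ℂ z) ^ (i.2 - 1 - 1)) • GLconjR) z :=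
    fun z => GL_hasFDerivAt_wirt_sum sig (fun i => a i.1 i.2 * (i.2 : ℂ))
      (fun i => i.1) (fun i => i.2 - 1) z
  set S : ℂ → ℂ :=
    fun z => ∑ i ∈ sig, a i.1 i.2 * (i.2 : ℂ) * i.1 * z ^ (i.1 - 1) *
      (starRingEnd ℂ z) ^ (i.2 - 1) with hSdef
  have hB1dz : ∀ z : ℂ, wirtingerDz B1 z = S z := fun z => (GL_wirt_eval (hB1d z)).1
  -- splitting the second derivative
  have hARfun : wirtingerDzbar (fun w => u w - T w)
      = fun z => wirtingerDzbar u z - B1 z := by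
    funext z
    rw [← hTzbar z]
    exact (GL_wirt_sub ((hsmooth.differentiable (by simp)) z) (hTd z).differentiableAt).2
  have hstep8 : ∀ z : ℂ, wirtingerDz (wirtingerDzbar (fun w => u w - T w)) z
      = wirtingerDz (wirtingerDzbar u) z - S z := by
    intro z
    rw [hARfun, ← hB1dz z]
    exact (GL_wirt_sub (GL_wirt_differentiable hsmooth z) (hB1d z).differentiableAt).1
  -- the second derivative of u is O(|z|^(M+1)) by the PDE
  have hv : (fun z : ℂ => wirtingerDz (wirtingerDzbar u) z) =O[nhds 0]
      fun z : ℂ => ‖z‖ ^ (M+1) := by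
    have hsmall : ∀ᶠ z in nhds (0:ℂ), ‖u z‖ ≤ 1 := by
      have hcont : Tendsto u (nhds 0) (nhds 0) := by
        have := (hsmooth.continuous.tendsto (0:ℂ))
        rwa [hzero] at this
      have h3 := hcont (Metric.closedBall_mem_nhds (0:ℂ) one_pos)
      exact Filter.mem_of_superset h3 (fun z hz => by
        simpa [Metric.mem_closedBall, dist_zero_right] using hz)
    have hvu : (fun z : ℂ => wirtingerDz (wirtingerDzbar u) z) =O[nhds 0] u := by
      rw [isBigO_iff]
      refine ⟨1, ?_⟩
      filter_upwards [hpde, hsmall] with z h1 h2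
      have hval : wirtingerDz (wirtingerDzbar u) z
          = u z * (1 - (‖u z‖ : ℂ) ^ 2) / (-4) := by
        linear_combination h1 / (-4)
      rw [hval]
      rw [norm_div, norm_mul]
      have hb : ‖1 - (‖u z‖ : ℂ) ^ 2‖ ≤ 2 := by
        calc ‖1 - (‖u z‖ : ℂ) ^ 2‖ ≤ ‖(1:ℂ)‖ + ‖(‖u z‖ : ℂ) ^ 2‖ := norm_sub_le _ _
          _ = 1 + ‖u z‖ ^ 2 := by
              rw [norm_one, norm_pow, Complex.norm_real, Real.norm_eq_abs,
                abs_of_nonneg (norm_nonneg _)]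
          _ ≤ 2 := by nlinarith [norm_nonneg (u z)]
      have h4 : ‖(-4 : ℂ)‖ = 4 := by
        rw [norm_neg]
        simp
      rw [h4, one_mul]
      calc ‖u z‖ * ‖1 - (‖u z‖ : ℂ) ^ 2‖ / 4 ≤ ‖u z‖ * 2 / 4 := by gcongr
        _ ≤ ‖u z‖ := by nlinarith [norm_nonneg (u z)]
    exact (hvu.trans huO).trans (GL_pow_isBigO_pow (by omega))
  -- second derivative of the remainder is O(|z|^(M+1))
  have hRb : wirtingerDzbar (fun w => u w - T w) =O[nhds 0] fun z : ℂ => ‖z‖ ^ (M+2) :=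
    (GL_wirt_parts_bigO hRan hu_T).2
  have hRb_an : AnalyticAt ℝ (wirtingerDzbar (fun w => u w - T w)) 0 := GL_wirt_analytic hRan
  have hDzRb : wirtingerDz (wirtingerDzbar (fun w => u w - T w)) =O[nhds 0]
      fun z : ℂ => ‖z‖ ^ (M+1) := (GL_wirt_parts_bigO hRb_an hRb).1
  -- hence S = O(|z|^(M+1))
  have hSO : S =O[nhds 0] fun z : ℂ => ‖z‖ ^ (M+1) := by
    have heq : S = fun z => wirtingerDz (wirtingerDzbar u) z
        - wirtingerDz (wirtingerDzbar (fun w => u w - T w)) z := by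
      funext z
      rw [hstep8 z]
      ring
    rw [heq]
    exact hv.sub hDzRb
  -- reduce S to a single homogeneous sum
  set d : ℕ → ℂ := fun j => a (j+1) (M+1-j) * ((M+1-j : ℕ) : ℂ) * ((j+1 : ℕ) : ℂ) with hddef
  have hSred : ∀ z : ℂ, S z
      = ∑ j ∈ Finset.range (M+1), d j * z ^ j * (starRingEnd ℂ z) ^ (M - j) := by
    intro z
    show (∑ i ∈ sig, a i.1 i.2 * (i.2 : ℂ) * i.1 * z ^ (i.1 - 1) *
      (starRingEnd ℂ z) ^ (i.2 - 1)) = _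
    have h1 : (∑ i ∈ sig, a i.1 i.2 * (i.2 : ℂ) * i.1 * z ^ (i.1 - 1) *
        (starRingEnd ℂ z) ^ (i.2 - 1))
        = ∑ p ∈ Finset.range (M+3), ∑ q ∈ Finset.range (M+3-p),
            a p q * (q : ℂ) * p * z ^ (p - 1) * (starRingEnd ℂ z) ^ (q - 1) := by
      rw [hsigdef]
      exact Finset.sum_sigma _ _ _
    rw [h1]
    have h2 : ∀ p ∈ Finset.range (M+3), (∑ q ∈ Finset.range (M+3-p),
        a p q * (q : ℂ) * p * z ^ (p - 1) * (starRingEnd ℂ z) ^ (q - 1))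
        = a p (M+2-p) * ((M+2-p : ℕ) : ℂ) * p * z ^ (p - 1)
          * (starRingEnd ℂ z) ^ ((M+2-p) - 1) := by
      intro p hp
      simp only [Finset.mem_range] at hp
      apply Finset.sum_eq_single_of_mem (M+2-p)
      · simp only [Finset.mem_range]
        omega
      · intro q hq hne
        simp only [Finset.mem_range] at hq
        have : a p q = 0 := hlow p q (by omega)
        simp [this]
    rw [Finset.sum_congr rfl h2]
    rw [Finset.sum_range_succ, Finset.sum_range_succ']
    have hzero1 : a (M+2) (M+2-(M+2)) * ((M+2-(M+2) : ℕ) : ℂ) * ((M+2 : ℕ) : ℂ)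
        * z ^ ((M+2) - 1) * (starRingEnd ℂ z) ^ ((M+2-(M+2)) - 1) = 0 := by
      simp
    have hzero0 : a 0 (M+2-0) * ((M+2-0 : ℕ) : ℂ) * ((0 : ℕ) : ℂ) * z ^ (0 - 1)
        * (starRingEnd ℂ z) ^ ((M+2-0) - 1) = 0 := by
      simp
    rw [hzero1, hzero0, add_zero, add_zero]
    apply Finset.sum_congr rfl
    intro j hj
    simp only [Finset.mem_range] at hj
    have e1 : M + 2 - (j+1) = M + 1 - j := by omega
    have e2 : (j + 1) - 1 = j := by omega
    have e3 : (M + 1 - j) - 1 = M - j := by omega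
    rw [e1, e2, e3, hddef]
  -- the homogeneous sum vanishes identically
  have hSfunO : (fun z : ℂ => ∑ j ∈ Finset.range (M+1),
      d j * z ^ j * (starRingEnd ℂ z) ^ (M - j)) =O[nhds 0] fun z : ℂ => ‖z‖ ^ (M+1) := by
    have heq : (fun z : ℂ => ∑ j ∈ Finset.range (M+1),
        d j * z ^ j * (starRingEnd ℂ z) ^ (M - j)) = S := by
      funext z
      rw [hSred z]
    rw [heq]
    exact hSO
  have hSzero : ∀ x : ℂ, ∑ j ∈ Finset.range (M+1),
      d j * x ^ j * (starRingEnd ℂ x) ^ (M - j) = 0 := by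
    apply GL_homog_vanish (n := M) ?_ hSfunO
    intro s x
    have hterm : ∀ j ∈ Finset.range (M+1),
        d j * (s • x) ^ j * (starRingEnd ℂ (s • x)) ^ (M - j)
        = ((s:ℂ)) ^ M * (d j * x ^ j * (starRingEnd ℂ x) ^ (M - j)) := by
      intro j hj
      simp only [Finset.mem_range] at hj
      rw [Complex.real_smul, map_mul, Complex.conj_ofReal, mul_pow, mul_pow]
      have hp : ((s:ℂ)) ^ j * ((s:ℂ)) ^ (M - j) = ((s:ℂ)) ^ M := by
        rw [← pow_add]
        congr 1
        omega
      linear_combination (d j * x ^ j * (starRingEnd ℂ x) ^ (M - j)) * hp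
    rw [Finset.sum_congr rfl hterm, ← Finset.mul_sum]
    rw [Complex.real_smul, Complex.ofReal_pow]
  -- Fourier argument: all d j vanish
  have hfour : ∀ θ : ℝ, ∑ j ∈ Finset.range (M+1),
      d j * Complex.exp ((2 * (j : ℂ)) * θ * Complex.I) = 0 := by
    intro θ
    have h0 := hSzero (Complex.exp (θ * Complex.I))
    have hconj : starRingEnd ℂ (Complex.exp (θ * Complex.I))
        = Complex.exp (-(θ * Complex.I)) := by
      rw [← Complex.exp_conj]
      congr 1
      simp [Complex.conj_I, Complex.conj_ofReal]
    have hterm : ∀ j ∈ Finset.range (M+1),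
        d j * (Complex.exp (θ * Complex.I)) ^ j
          * (starRingEnd ℂ (Complex.exp (θ * Complex.I))) ^ (M - j)
        = (d j * Complex.exp ((2 * (j : ℂ)) * θ * Complex.I))
          * Complex.exp (-(M : ℂ) * θ * Complex.I) := by
      intro j hj
      simp only [Finset.mem_range] at hj
      rw [hconj, ← Complex.exp_nat_mul, ← Complex.exp_nat_mul]
      rw [mul_assoc (d j) (Complex.exp _) (Complex.exp _),
        mul_assoc (d j) (Complex.exp _) (Complex.exp _), ← Complex.exp_add, ← Complex.exp_add]
      congr 2
      have : ((M - j : ℕ) : ℂ) = (M : ℂ) - (j : ℂ) := Nat.cast_sub (by omega)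
      rw [this]
      ring
    rw [Finset.sum_congr rfl hterm, ← Finset.sum_mul] at h0
    rcases mul_eq_zero.1 h0 with h | h
    · exact h
    · exact absurd h (Complex.exp_ne_zero _)
  have hdzero : ∀ j ∈ Finset.range (M+1), d j = 0 := GL_fourier d hfour
  -- Part 1: mixed coefficients vanish
  have part1 : ∀ p q : ℕ, p + q = M + 2 → 1 ≤ p → 1 ≤ q → a p q = 0 := by
    intro p q hpq hp hq
    obtain ⟨j, rfl⟩ : ∃ j, p = j + 1 := ⟨p - 1, by omega⟩
    have hj : j ∈ Finset.range (M+1) := by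
      simp only [Finset.mem_range]
      omega
    have hd := hdzero j hj
    simp only [hddef] at hd
    have hqe : M + 1 - j = q := by omega
    rw [hqe] at hd
    rcases mul_eq_zero.1 hd with h | h
    · rcases mul_eq_zero.1 h with h' | h'
      · exact h'
      · exfalso
        have : (q : ℂ) ≠ 0 := Nat.cast_ne_zero.2 (by omega)
        exact this h'
    · exfalso
      have : ((j+1 : ℕ) : ℂ) ≠ 0 := Nat.cast_ne_zero.2 (by omega)
      exact this h
  refine ⟨part1, ?_⟩
  -- Part 2: the asymptotic expansion
  have hfin : ∀ z : ℂ, (∑ p ∈ Finset.range (M+2+1), ∑ q ∈ Finset.range (M+2+1-p),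
      a p q * z ^ p * (starRingEnd ℂ z) ^ q)
      = a (M+2) 0 * z ^ (M+2) + a 0 (M+2) * (starRingEnd ℂ z) ^ (M+2) := by
    intro z
    have h2 : ∀ p ∈ Finset.range (M+3), (∑ q ∈ Finset.range (M+3-p),
        a p q * z ^ p * (starRingEnd ℂ z) ^ q)
        = a p (M+2-p) * z ^ p * (starRingEnd ℂ z) ^ (M+2-p) := by
      intro p hp
      simp only [Finset.mem_range] at hp
      apply Finset.sum_eq_single_of_mem (M+2-p)
      · simp only [Finset.mem_range]
        omega
      · intro q hq hne
        simp only [Finset.mem_range] at hq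
        have : a p q = 0 := hlow p q (by omega)
        simp [this]
    rw [show M + 2 + 1 = M + 3 from rfl]
    rw [Finset.sum_congr rfl h2, Finset.sum_range_succ]
    have h3 : (∑ p ∈ Finset.range (M+2),
        a p (M+2-p) * z ^ p * (starRingEnd ℂ z) ^ (M+2-p))
        = a 0 (M+2) * (starRingEnd ℂ z) ^ (M+2) := by
      rw [Finset.sum_eq_single_of_mem 0 (by simp)]
      · simp
      · intro p hp hne
        simp only [Finset.mem_range] at hp
        have : a p (M+2-p) = 0 := part1 p (M+2-p) (by omega) (by omega) (by omega)
        simp [this]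
    rw [h3]
    simp
    ring
  have h := htaylor (M+2)
  have heq : (fun z : ℂ => u z - ∑ p ∈ Finset.range (M+2+1), ∑ q ∈ Finset.range (M+2+1-p),
      a p q * z ^ p * (starRingEnd ℂ z) ^ q)
      = fun z : ℂ => u z - (a (M+2) 0 * z ^ (M+2) + a 0 (M+2) * (starRingEnd ℂ z) ^ (M+2)) := by
    funext z
    rw [hfin z]
  rw [heq] at h
  exact h
end
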